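/- arXiv:1409.4279 — 2 statements merged into one kernel-verified Lean document; each statement's English description precedes it below -/
import Mathlib

section
/- Restricted isometry lower bound from the principal angle: let Q ∈ ℝ^{n×m} have orthonormal columns (QᵀQ = Iₘ), let δ ∈ [0,1] satisfy the principal-angle bound for sparsity level s, and let S ⊆ {1,…,n} with |S| ≤ s. Then for every w ∈ ℝᵐ and every c ∈ ℝ^{|S|}, ‖Qw + I_S c‖₂² ≥ (1 − δ)(‖w‖₂² + ‖c‖₂²); in particular, every singular value of the matrix Φ = [Q I_S] is at least √(1 − δ). -/
open Matrix

/-- Euclidean (ℓ₂) norm of a finitely-indexed real vector. -/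
noncomputable def norm2 {ι : Type*} [Fintype ι] (v : ι → ℝ) : ℝ :=
  Real.sqrt (∑ i, v i ^ 2)

/-- A vector of `ℝⁿ` is `s`-sparse if it has at most `s` nonzero entries. -/
def Sparse {n : ℕ} (s : ℕ) (v : Fin n → ℝ) : Prop :=
  ∃ T : Finset (Fin n), T.card ≤ s ∧ ∀ i ∉ T, v i = 0

/-- `δ` satisfies the principal-angle bound for `Q` at sparsity level `s`:
`|⟨Qw, v⟩| ≤ δ ‖Qw‖₂ ‖v‖₂` for every `w` and every `s`-sparse `v`. -/
def PABound {n m : ℕ} (Q : Matrix (Fin n) (Fin m) ℝ) (s : ℕ) (δ : ℝ) : Prop :=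
  ∀ (w : Fin m → ℝ) (v : Fin n → ℝ), Sparse s v →
    |Q.mulVec w ⬝ᵥ v| ≤ δ * norm2 (Q.mulVec w) * norm2 v

/-- The `n × |S|` matrix `I_S` whose columns are the standard basis vectors `e_j`, `j ∈ S`. -/
def colSel {n : ℕ} (S : Finset (Fin n)) : Matrix (Fin n) {i // i ∈ S} ℝ :=
  Matrix.of fun i j => if i = (j : Fin n) then 1 else 0

/-- `F_S(a) = I_S I_Sᵀ a`: the vector agreeing with `a` on `S` and zero elsewhere. -/
def restrictVec {n : ℕ} (S : Finset (Fin n)) (a : Fin n → ℝ) : Fin n → ℝ :=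
  fun i => if i ∈ S then a i else 0

/-! For `a = ‖Qw‖ = ‖w‖` and `b = ‖I_S c‖ = ‖c‖`, the principal-angle bound applies since
`I_S c` is supported on `S`, and gives `‖Qw + I_S c‖² ≥ a² + b² − 2δab ≥ (1 − δ)(a² + b²)`
by `2ab ≤ a² + b²`. -/

section Norm2

variable {ι : Type*} [Fintype ι]

lemma norm2_sq (u : ι → ℝ) : norm2 u ^ 2 = u ⬝ᵥ u := by
  rw [norm2, Real.sq_sqrt (by positivity)]
  simp only [dotProduct, sq]

lemma norm2_add_sq (u v : ι → ℝ) :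
    norm2 (u + v) ^ 2 = norm2 u ^ 2 + 2 * (u ⬝ᵥ v) + norm2 v ^ 2 := by
  simp only [norm2_sq, add_dotProduct, dotProduct_add, dotProduct_comm v u]
  ring

lemma norm2_mulVec_sq_of_transpose_mul_self {κ : Type*} [Fintype κ] [DecidableEq κ]
    {A : Matrix ι κ ℝ} (hA : Aᵀ * A = 1) (x : κ → ℝ) : norm2 (A *ᵥ x) ^ 2 = norm2 x ^ 2 := by
  rw [norm2_sq, norm2_sq, dotProduct_mulVec, ← mulVec_transpose, mulVec_mulVec, hA,
    one_mulVec]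

lemma mul_norm2_sq_add_le_norm2_add_sq {δ : ℝ} (hδ : 0 ≤ δ) {u v : ι → ℝ}
    (huv : |u ⬝ᵥ v| ≤ δ * norm2 u * norm2 v) :
    (1 - δ) * (norm2 u ^ 2 + norm2 v ^ 2) ≤ norm2 (u + v) ^ 2 := by
  have hlower : -(δ * norm2 u * norm2 v) ≤ u ⬝ᵥ v := neg_le_of_abs_le huv
  have hamgm : 2 * (norm2 u * norm2 v) ≤ norm2 u ^ 2 + norm2 v ^ 2 := by
    nlinarith [sq_nonneg (norm2 u - norm2 v)]
  rw [norm2_add_sq]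
  nlinarith [mul_le_mul_of_nonneg_left hamgm hδ]

end Norm2

section ColSel

variable {n : ℕ} (S : Finset (Fin n))

lemma colSel_mulVec_apply (c : {i // i ∈ S} → ℝ) (i : Fin n) :
    (colSel S *ᵥ c) i = if h : i ∈ S then c ⟨i, h⟩ else 0 := by
  split_ifs with h
  · rw [mulVec, dotProduct, Finset.sum_eq_single ⟨i, h⟩]
    · simp [colSel]
    · intro j _ hj
      simp [colSel, Ne.symm (Subtype.ext_iff.not.mp hj)]
    · simp
  · refine Finset.sum_eq_zero fun j _ => ?_
    simp [colSel, show i ≠ j from fun hij => h (hij ▸ j.2)]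

lemma colSel_transpose_mul_self : (colSel S)ᵀ * colSel S = 1 := by
  ext j k
  simp only [mul_apply, transpose_apply, colSel, of_apply, one_apply, boole_mul]
  rw [Finset.sum_ite_eq']
  simp only [Finset.mem_univ, if_true, Subtype.val_inj]

lemma sparse_colSel_mulVec {s : ℕ} (hS : S.card ≤ s) (c : {i // i ∈ S} → ℝ) :
    Sparse s (colSel S *ᵥ c) :=
  ⟨S, hS, fun i hi => by rw [colSel_mulVec_apply, dif_neg hi]⟩

end ColSel

theorem stmt7_general {n m s : ℕ} (Q : Matrix (Fin n) (Fin m) ℝ) (hQ : Qᵀ * Q = 1)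
    (δ : ℝ) (hδ0 : 0 ≤ δ) (hPA : PABound Q s δ)
    (S : Finset (Fin n)) (hcard : S.card ≤ s) :
    ∀ (w : Fin m → ℝ) (c : {i // i ∈ S} → ℝ),
      (1 - δ) * (norm2 w ^ 2 + norm2 c ^ 2)
        ≤ norm2 (Q.mulVec w + (colSel S).mulVec c) ^ 2 := by
  intro w c
  have hangle := hPA w _ (sparse_colSel_mulVec S hcard c)
  rw [← norm2_mulVec_sq_of_transpose_mul_self hQ w,
    ← norm2_mulVec_sq_of_transpose_mul_self (colSel_transpose_mul_self S) c]
  exact mul_norm2_sq_add_le_norm2_add_sq hδ0 hangle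

/-- Restricted isometry lower bound from the principal angle: for `|S| ≤ s`,
`‖Qw + I_S c‖₂² ≥ (1 − δ)(‖w‖₂² + ‖c‖₂²)` for every `w` and `c`; in particular every
singular value of `[Q I_S]` is at least `√(1 − δ)`. -/
theorem stmt7 {n m s : ℕ} (Q : Matrix (Fin n) (Fin m) ℝ) (hQ : Qᵀ * Q = 1)
    (δ : ℝ) (hδ0 : 0 ≤ δ) (hδ1 : δ ≤ 1) (hPA : PABound Q s δ)
    (S : Finset (Fin n)) (hcard : S.card ≤ s) :
    ∀ (w : Fin m → ℝ) (c : {i // i ∈ S} → ℝ),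
      (1 - δ) * (norm2 w ^ 2 + norm2 c ^ 2)
        ≤ norm2 (Q.mulVec w + (colSel S).mulVec c) ^ 2 :=
  stmt7_general Q hQ δ hδ0 hPA S hcard
end

section
/- Error bound on the recovered regression vector when the outlier support is correctly identified: let X ∈ ℝ^{n×m} have full column rank with X = QR where Q ∈ ℝ^{n×m} has orthonormal columns (QᵀQ = Iₘ) and R ∈ ℝ^{m×m} is invertible, and let τ > 0 satisfy ‖Xθ‖₂ ≥ τ‖θ‖₂ for all θ ∈ ℝᵐ (τ is the smallest singular value of X). Suppose y = Xθ₀ + u₀ + η with supp(u₀) ⊆ S, ‖η‖₂ ≤ ε₀, and let δ ∈ [0,1) satisfy ‖Qw + I_S c‖₂² ≥ (1 − δ)(‖w‖₂² + ‖c‖₂²) for every w ∈ ℝᵐ and c ∈ ℝ^{|S|}. If (w*, c*) minimizes ‖y − Qw − I_S c‖₂ over (w, c), then the estimate θ* = R⁻¹ w* satisfies ‖θ* − θ₀‖₂ ≤ ε₀ / (τ √(1 − δ)). -/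
open Matrix

/-!
Write `w₀ = Rθ₀` and `c₀ = u₀|_S`, so that `y = Qw₀ + I_S c₀ + η`. The fitted vector
`Qw* + I_S c*` is the nearest point to `y` in the column space of `[Q I_S]`, and a nearest point
in a convex set is at least as close as `y` to every point of that set; hence
`‖Q(w* − w₀) + I_S(c* − c₀)‖₂ ≤ ‖η‖₂ ≤ ε₀`. The restricted-isometry bound turns this into
`√(1 − δ) ‖w* − w₀‖₂ ≤ ε₀`, and since `X(θ* − θ₀) = Q(w* − w₀)` with `Q` an isometry,
`τ ‖θ* − θ₀‖₂ ≤ ‖w* − w₀‖₂`.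
-/

theorem Convex.norm_sub_le_of_isMinOn {F : Type*} [NormedAddCommGroup F]
    [InnerProductSpace ℝ F] {K : Set F} (hK : Convex ℝ K) {y p q : F} (hp : p ∈ K) (hq : q ∈ K)
    (hmin : IsMinOn (fun w => ‖y - w‖) K p) : ‖p - q‖ ≤ ‖y - q‖ := by
  have : Nonempty K := ⟨⟨p, hp⟩⟩
  have hinf : ‖y - p‖ = ⨅ w : K, ‖y - w‖ :=
    le_antisymm (le_ciInf fun w => isMinOn_iff.mp hmin w w.2)
      (ciInf_le ⟨0, Set.forall_mem_range.2 fun _ => norm_nonneg _⟩ (⟨p, hp⟩ : K))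
  have hobtuse : inner ℝ (y - p) (q - p) ≤ 0 :=
    (norm_eq_iInf_iff_real_inner_le_zero hK hp).mp hinf q hq
  have hsplit : ‖y - q‖ ^ 2 = ‖y - p‖ ^ 2 - 2 * inner ℝ (y - p) (q - p) + ‖p - q‖ ^ 2 := by
    rw [norm_sub_rev p q, ← norm_sub_sq_real, sub_sub_sub_cancel_right]
  exact pow_le_pow_iff_left₀ (norm_nonneg _) (norm_nonneg _) two_ne_zero |>.mp
    (by nlinarith [sq_nonneg ‖y - p‖])

section norm2

variable {ι : Type*} [Fintype ι]

theorem norm2_nonneg (v : ι → ℝ) : 0 ≤ norm2 v :=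
  Real.sqrt_nonneg _

theorem norm2_eq_sqrt_dotProduct (v : ι → ℝ) : norm2 v = √(v ⬝ᵥ v) := by
  simp only [norm2, dotProduct, sq]

theorem norm2_eq_norm_toLp (v : ι → ℝ) : norm2 v = ‖WithLp.toLp 2 v‖ := by
  simp [norm2, EuclideanSpace.norm_eq]

theorem norm2_mulVec_of_transpose_mul_self {κ : Type*} [Fintype κ] [DecidableEq κ]
    {Q : Matrix ι κ ℝ} (hQ : Qᵀ * Q = 1) (v : κ → ℝ) : norm2 (Q *ᵥ v) = norm2 v := by
  rw [norm2_eq_sqrt_dotProduct, norm2_eq_sqrt_dotProduct, dotProduct_mulVec,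
    ← mulVec_transpose, mulVec_mulVec, hQ, one_mulVec]

theorem norm2_sub_le_of_isMinOn {E : Type*} [AddCommGroup E] [Module ℝ E]
    (L : E →ₗ[ℝ] ι → ℝ) (y : ι → ℝ) {x : E}
    (hx : ∀ x', norm2 (y - L x) ≤ norm2 (y - L x')) (x' : E) :
    norm2 (L x - L x') ≤ norm2 (y - L x') := by
  let L₂ : E →ₗ[ℝ] EuclideanSpace ℝ ι := (WithLp.linearEquiv 2 ℝ (ι → ℝ)).symm.toLinearMap ∘ₗ L
  simp only [norm2_eq_norm_toLp, WithLp.toLp_sub] at hx ⊢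
  refine (LinearMap.range L₂).convex.norm_sub_le_of_isMinOn ⟨x, rfl⟩ ⟨x', rfl⟩ ?_
  rw [isMinOn_iff]
  rintro _ ⟨x'', rfl⟩
  exact hx x''

end norm2

theorem colSel_mulVec_restrict {n : ℕ} (S : Finset (Fin n)) (a : Fin n → ℝ) :
    colSel S *ᵥ (fun j : {i // i ∈ S} => a j) = restrictVec S a := by
  ext i
  by_cases hi : i ∈ S
  · rw [mulVec, dotProduct, Finset.sum_eq_single ⟨i, hi⟩]
    · simp [colSel, restrictVec, hi]
    · intro j _ hj
      simp [colSel, Ne.symm (Subtype.coe_ne_coe.mpr hj)]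
    · simp
  · refine (Finset.sum_eq_zero fun j _ => ?_).trans (if_neg hi).symm
    simp [colSel, show i ≠ j from fun h => hi (h ▸ j.2)]

theorem restrictVec_eq_self {n : ℕ} {S : Finset (Fin n)} {a : Fin n → ℝ}
    (ha : ∀ i ∉ S, a i = 0) : restrictVec S a = a := by
  ext i
  by_cases hi : i ∈ S <;> simp [restrictVec, hi, ha]

theorem stmt9_general {n m : ℕ} (X : Matrix (Fin n) (Fin m) ℝ)
    (Q : Matrix (Fin n) (Fin m) ℝ) (R : Matrix (Fin m) (Fin m) ℝ)
    (hQ : Qᵀ * Q = 1) (hR : IsUnit R) (hQR : X = Q * R)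
    (τ : ℝ) (hτ : 0 < τ) (hX : ∀ θ : Fin m → ℝ, τ * norm2 θ ≤ norm2 (X.mulVec θ))
    (θ₀ : Fin m → ℝ) (u₀ η : Fin n → ℝ) (S : Finset (Fin n))
    (hsupp : ∀ i ∉ S, u₀ i = 0) (ε₀ : ℝ) (hη : norm2 η ≤ ε₀)
    (y : Fin n → ℝ) (hy : y = X.mulVec θ₀ + u₀ + η)
    (δ : ℝ) (hδ1 : δ < 1)
    (hRIP : ∀ (w : Fin m → ℝ) (c : {i // i ∈ S} → ℝ),
      (1 - δ) * (norm2 w ^ 2 + norm2 c ^ 2)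
        ≤ norm2 (Q.mulVec w + (colSel S).mulVec c) ^ 2)
    (wstar : Fin m → ℝ) (cstar : {i // i ∈ S} → ℝ)
    (hmin : ∀ (w : Fin m → ℝ) (c : {i // i ∈ S} → ℝ),
      norm2 (y - Q.mulVec wstar - (colSel S).mulVec cstar)
        ≤ norm2 (y - Q.mulVec w - (colSel S).mulVec c))
    (θstar : Fin m → ℝ) (hθ : θstar = (R⁻¹).mulVec wstar) :
    norm2 (θstar - θ₀) ≤ ε₀ / (τ * Real.sqrt (1 - δ)) := by
  let L := Q.mulVecLin.coprod (colSel S).mulVecLin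
  have hL (w c) : L (w, c) = Q *ᵥ w + colSel S *ᵥ c := rfl
  set w₀ := R *ᵥ θ₀
  set c₀ : {i // i ∈ S} → ℝ := fun j => u₀ j
  have hy₀ : y - L (w₀, c₀) = η := by
    rw [hL, colSel_mulVec_restrict, restrictVec_eq_self hsupp, hy, hQR, ← mulVec_mulVec]
    abel
  have hfit : norm2 (L (wstar, cstar) - L (w₀, c₀)) ≤ ε₀ := by
    refine (norm2_sub_le_of_isMinOn L y (fun ⟨w, c⟩ => ?_) _).trans (hy₀ ▸ hη)
    simpa only [hL, sub_sub] using hmin w c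
  have hw : (1 - δ) * norm2 (wstar - w₀) ^ 2 ≤ ε₀ ^ 2 := by
    have hrip := hRIP (wstar - w₀) (cstar - c₀)
    rw [mulVec_sub, mulVec_sub, ← add_sub_add_comm, ← hL, ← hL] at hrip
    nlinarith [norm2_nonneg (cstar - c₀), pow_le_pow_left₀ (norm2_nonneg _) hfit 2]
  have hθw : τ * norm2 (θstar - θ₀) ≤ norm2 (wstar - w₀) := by
    have hXθ : X *ᵥ (θstar - θ₀) = Q *ᵥ (wstar - w₀) := by
      rw [hθ, hQR, mulVec_sub, mulVec_mulVec, Matrix.mul_assoc,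
        mul_nonsing_inv R ((isUnit_iff_isUnit_det R).mp hR), Matrix.mul_one, ← mulVec_mulVec,
        ← mulVec_sub]
    simpa only [hXθ, norm2_mulVec_of_transpose_mul_self hQ] using hX (θstar - θ₀)
  have hδ : 0 ≤ 1 - δ := by linarith
  have hε₀ : 0 ≤ ε₀ := (norm2_nonneg η).trans hη
  rw [le_div_iff₀ (by positivity)]
  calc norm2 (θstar - θ₀) * (τ * √(1 - δ)) = √(1 - δ) * (τ * norm2 (θstar - θ₀)) := by ring
    _ ≤ √(1 - δ) * norm2 (wstar - w₀) := by gcongr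
    _ = √((1 - δ) * norm2 (wstar - w₀) ^ 2) := by
      rw [Real.sqrt_mul hδ, Real.sqrt_sq (norm2_nonneg _)]
    _ ≤ √(ε₀ ^ 2) := Real.sqrt_le_sqrt hw
    _ = ε₀ := Real.sqrt_sq hε₀

/-- Error bound on the recovered regression vector when the outlier support is correctly
identified: with `X = QR`, `τ` the lower bound on singular values of `X`, outliers
supported in `S`, inlier noise `‖η‖₂ ≤ ε₀`, and the restricted-isometry bound `(1 − δ)`
for `[Q I_S]`, the estimate `θ* = R⁻¹ w*` from the least-squares fit over `[Q I_S]`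
satisfies `‖θ* − θ₀‖₂ ≤ ε₀ / (τ √(1 − δ))`. -/
theorem stmt9 {n m : ℕ} (X : Matrix (Fin n) (Fin m) ℝ)
    (Q : Matrix (Fin n) (Fin m) ℝ) (R : Matrix (Fin m) (Fin m) ℝ)
    (hQ : Qᵀ * Q = 1) (hR : IsUnit R) (hQR : X = Q * R)
    (τ : ℝ) (hτ : 0 < τ) (hX : ∀ θ : Fin m → ℝ, τ * norm2 θ ≤ norm2 (X.mulVec θ))
    (θ₀ : Fin m → ℝ) (u₀ η : Fin n → ℝ) (S : Finset (Fin n))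
    (hsupp : ∀ i ∉ S, u₀ i = 0) (ε₀ : ℝ) (hη : norm2 η ≤ ε₀)
    (y : Fin n → ℝ) (hy : y = X.mulVec θ₀ + u₀ + η)
    (δ : ℝ) (hδ0 : 0 ≤ δ) (hδ1 : δ < 1)
    (hRIP : ∀ (w : Fin m → ℝ) (c : {i // i ∈ S} → ℝ),
      (1 - δ) * (norm2 w ^ 2 + norm2 c ^ 2)
        ≤ norm2 (Q.mulVec w + (colSel S).mulVec c) ^ 2)
    (wstar : Fin m → ℝ) (cstar : {i // i ∈ S} → ℝ)
    (hmin : ∀ (w : Fin m → ℝ) (c : {i // i ∈ S} → ℝ),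
      norm2 (y - Q.mulVec wstar - (colSel S).mulVec cstar)
        ≤ norm2 (y - Q.mulVec w - (colSel S).mulVec c))
    (θstar : Fin m → ℝ) (hθ : θstar = (R⁻¹).mulVec wstar) :
    norm2 (θstar - θ₀) ≤ ε₀ / (τ * Real.sqrt (1 - δ)) :=
  stmt9_general X Q R hQ hR hQR τ hτ hX θ₀ u₀ η S hsupp ε₀ hη y hy δ hδ1 hRIP wstar cstar hmin θstar
    hθ
end
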